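/- Let C \subseteq \mathbb{H}(n,q) be a code of cardinality M \ge 2 and h: [-1,1) \to (0,\infty) a function. Suppose f(t) = \sum_{i=0}^n f_i Q_i^{(n,q)}(t) is a real polynomial with f(t) \le h(t) for all t \in T_n = \{-1+2i/n : 0 \le i \le n\}, and f_i \ge 0 for all i \ge 1. Then E(n,C;h) := \frac{1}{|C|}\sum_{x,y \in C, x \ne y} h(\langle x,y\rangle) \ge f_0 M - f(1). -/

import Mathlib

/-- Generalized binomial coefficient `C(x, j)` as a polynomial expression in a real `x`. -/
noncomputable def binomPoly (x : ℝ) (j : ℕ) : ℝ :=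
  (∏ m ∈ Finset.range j, (x - (m : ℝ))) / (Nat.factorial j : ℝ)

/-- Krawtchouk polynomial `K_i^{(n,q)}(z)`. -/
noncomputable def kraw (n q i : ℕ) (z : ℝ) : ℝ :=
  ∑ j ∈ Finset.range (i + 1),
    (-1 : ℝ) ^ j * ((q : ℝ) - 1) ^ (i - j) * binomPoly z j * binomPoly ((n : ℝ) - z) (i - j)

/-- Normalized Krawtchouk polynomial `Q_i^{(n,q)}(t)`. -/
noncomputable def Qnorm (n q i : ℕ) (t : ℝ) : ℝ :=
  kraw n q i ((n : ℝ) * (1 - t) / 2) / (((q : ℝ) - 1) ^ i * (n.choose i : ℝ))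

/-- Hamming distance between two words of `ℍ(n,q)`. -/
def hammingDist' {n q : ℕ} (x y : Fin n → Fin q) : ℕ :=
  (Finset.univ.filter fun i => x i ≠ y i).card

/-- "Inner product" `⟨x,y⟩ = 1 - 2 d(x,y)/n`. -/
noncomputable def innerProd {n q : ℕ} (x y : Fin n → Fin q) : ℝ :=
  1 - 2 * (hammingDist' x y : ℝ) / (n : ℝ)

/-!
Delsarte's linear-programming argument. Expanding `f` in the Krawtchouk basis, the double sum
`∑_{x,y ∈ C} f ⟨x,y⟩` equals `∑_i f_i ∑_{x,y} Q_i ⟨x,y⟩`; the term `i = 0` is `f_0 M²` (as `Q_0 = 1`)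
and the others are nonnegative, so the double sum is at least `f_0 M²`. On the other hand its
diagonal contributes `M f(1)` and, since all inner products lie in `T_n`, each off-diagonal term is
at most `h ⟨x,y⟩`, so it is at most `M f(1) + M E(n,C;h)`.
-/

open Finset

section DoubleSum

variable {α : Type*} (C : Finset α)

theorem mul_sq_card_le_sum_sum_of_nonneg {N : ℕ} (K : ℕ → α → α → ℝ) (c : ℕ → ℝ)
    (hK₀ : ∀ x y, K 0 x y = 1) (hc : ∀ i, 1 ≤ i → 0 ≤ c i)
    (hK : ∀ i, 1 ≤ i → i ≤ N → 0 ≤ ∑ x ∈ C, ∑ y ∈ C, K i x y) :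
    c 0 * (#C : ℝ) ^ 2 ≤ ∑ x ∈ C, ∑ y ∈ C, ∑ i ∈ range (N + 1), c i * K i x y := by
  have hswap : ∑ x ∈ C, ∑ y ∈ C, ∑ i ∈ range (N + 1), c i * K i x y
      = ∑ i ∈ range (N + 1), c i * ∑ x ∈ C, ∑ y ∈ C, K i x y := by
    rw [sum_congr rfl fun _ _ => sum_comm, sum_comm]
    simp only [mul_sum]
  have hhigher : 0 ≤ ∑ i ∈ range N, c (i + 1) * ∑ x ∈ C, ∑ y ∈ C, K (i + 1) x y :=
    sum_nonneg fun i hi =>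
      mul_nonneg (hc _ i.succ_pos) (hK _ i.succ_pos (mem_range.mp hi))
  rw [hswap, sum_range_succ']
  simp only [hK₀, sum_const, nsmul_eq_mul, mul_one]
  linarith

theorem sum_sum_le_card_mul_add_sum_sdiff [DecidableEq α] (F H : α → α → ℝ) (a : ℝ)
    (hdiag : ∀ x ∈ C, F x x = a) (hoff : ∀ x ∈ C, ∀ y ∈ C, y ≠ x → F x y ≤ H x y) :
    ∑ x ∈ C, ∑ y ∈ C, F x y ≤ #C * a + ∑ x ∈ C, ∑ y ∈ C \ {x}, H x y := by
  have hrow : ∀ x ∈ C, ∑ y ∈ C, F x y ≤ a + ∑ y ∈ C \ {x}, H x y := by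
    intro x hx
    rw [← add_sum_erase C _ hx, hdiag x hx, ← erase_eq]
    gcongr with y hy
    exact hoff x hx y (mem_of_mem_erase hy) (ne_of_mem_erase hy)
  calc ∑ x ∈ C, ∑ y ∈ C, F x y ≤ ∑ x ∈ C, (a + ∑ y ∈ C \ {x}, H x y) := sum_le_sum hrow
    _ = #C * a + ∑ x ∈ C, ∑ y ∈ C \ {x}, H x y := by
      rw [sum_add_distrib, sum_const, nsmul_eq_mul]

end DoubleSum

lemma Qnorm_zero (n q : ℕ) (t : ℝ) : Qnorm n q 0 t = 1 := by
  simp [Qnorm, kraw, binomPoly]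

lemma innerProd_self {n q : ℕ} (x : Fin n → Fin q) : innerProd x x = 1 := by
  simp [innerProd, hammingDist']

lemma hammingDist'_le {n q : ℕ} (x y : Fin n → Fin q) : hammingDist' x y ≤ n :=
  (card_filter_le _ _).trans_eq (card_fin n)

lemma innerProd_eq_neg_one_add {n q : ℕ} (hn : n ≠ 0) (x y : Fin n → Fin q) :
    innerProd x y = -1 + 2 * ((n - hammingDist' x y : ℕ) : ℝ) / n := by
  rw [Nat.cast_sub (hammingDist'_le x y), innerProd]
  field_simp
  ring

theorem stmt_4_general (n q : ℕ) (hn : 1 ≤ n)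
    (C : Finset (Fin n → Fin q)) (M : ℕ) (hM : C.card = M) (hM2 : 2 ≤ M)
    (h : ℝ → ℝ)
    (c : ℕ → ℝ) (f : ℝ → ℝ)
    (hf : ∀ t : ℝ, f t = ∑ i ∈ Finset.range (n + 1), c i * Qnorm n q i t)
    (hfh : ∀ i ∈ Finset.range (n + 1), f (-1 + 2 * (i : ℝ) / n) ≤ h (-1 + 2 * (i : ℝ) / n))
    (hcoef : ∀ i : ℕ, 1 ≤ i → 0 ≤ c i)
    (hpd : ∀ i : ℕ, 1 ≤ i → i ≤ n →
      0 ≤ ∑ x ∈ C, ∑ y ∈ C, Qnorm n q i (innerProd x y)) :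
    c 0 * (M : ℝ) - f 1 ≤
      (1 / (M : ℝ)) * ∑ x ∈ C, ∑ y ∈ C \ {x}, h (innerProd x y) := by
  have hlower := mul_sq_card_le_sum_sum_of_nonneg C (fun i x y => Qnorm n q i (innerProd x y)) c
    (fun _ _ => Qnorm_zero n q _) hcoef hpd
  have hupper := sum_sum_le_card_mul_add_sum_sdiff C (fun x y => f (innerProd x y))
    (fun x y => h (innerProd x y)) (f 1) (fun x _ => by rw [innerProd_self])
    fun x _ y _ _ => by
      rw [innerProd_eq_neg_one_add (by omega)]
      exact hfh _ (mem_range.mpr (by omega))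
  simp only [← hf, hM] at hlower hupper
  have hMpos : (0 : ℝ) < M := by exact_mod_cast (by omega : 0 < M)
  rw [one_div, ← div_eq_inv_mul, le_div_iff₀ hMpos]
  linarith

theorem stmt_4 (n q : ℕ) (hn : 1 ≤ n) (hq : 2 ≤ q)
    (C : Finset (Fin n → Fin q)) (M : ℕ) (hM : C.card = M) (hM2 : 2 ≤ M)
    (h : ℝ → ℝ) (hpos : ∀ t ∈ Set.Ico (-1 : ℝ) 1, 0 < h t)
    (c : ℕ → ℝ) (f : ℝ → ℝ)
    (hf : ∀ t : ℝ, f t = ∑ i ∈ Finset.range (n + 1), c i * Qnorm n q i t)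
    (hfh : ∀ i ∈ Finset.range (n + 1), f (-1 + 2 * (i : ℝ) / n) ≤ h (-1 + 2 * (i : ℝ) / n))
    (hcoef : ∀ i : ℕ, 1 ≤ i → 0 ≤ c i)
    (hpd : ∀ i : ℕ, 1 ≤ i → i ≤ n →
      0 ≤ ∑ x ∈ C, ∑ y ∈ C, Qnorm n q i (innerProd x y)) :
    c 0 * (M : ℝ) - f 1 ≤
      (1 / (M : ℝ)) * ∑ x ∈ C, ∑ y ∈ C \ {x}, h (innerProd x y) :=
  stmt_4_general n q hn C M hM hM2 h c f hf hfh hcoef hpd
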